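/- The cofactor of the entry in position (i,1) of the matrix Φ^{(m)}_{t,s} equals ξ_{t,s+i}, the principal determinant with shifted starting index; i.e., (−1)^{i+1} times the (i,1)-minor of Φ^{(m)}_{t,s} equals det(Φ^{(1)}_{t,s+i}). -/

import Mathlib

/-!
Deleting row `q` and the first column of a lower Hessenberg matrix leaves a block lower
triangular matrix. Its upper-left block consists of the first `q` rows; it is lower triangular
with the superdiagonal of the original matrix on its diagonal, which for `Φ` is all `-1`. Its
lower-right block is the trailing principal block of the original matrix from row `q + 1` on.
For `Φ^{(m)}_{t,s}` this block no longer meets the first column, the only place where `m`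
enters, so it is `Φ^{(1)}_{t,s+q+1}`. The signs `(-1)^q` and `(-1)^(q+2)` cancel.
-/

/-- The `k × k` banded lower Hessenberg matrix `Φ^{(m)}_{t,s}` (here `k = t - s`),
0-indexed: superdiagonal entries are `-1`; first-column entries (row `i`, 0-indexed) are
`φ_{i+m}(s+i+1)` when `i + m ≤ p` and `0` otherwise; for columns `j ≥ 1` (0-indexed) the
`(i,j)` entry is `φ_{i-j+1}(s+i+1)` when `j ≤ i` and `i - j + 1 ≤ p`, and `0` otherwise. -/
def Phi (p : ℕ) (φ : ℕ → ℤ → ℂ) (m : ℕ) (s : ℤ) (k : ℕ) :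
    Matrix (Fin k) (Fin k) ℂ :=
  Matrix.of fun i j =>
    if (j : ℕ) = (i : ℕ) + 1 then -1
    else if (j : ℕ) = 0 then
      (if (i : ℕ) + m ≤ p then φ ((i : ℕ) + m) (s + (i : ℕ) + 1) else 0)
    else if (j : ℕ) ≤ (i : ℕ) then
      (if (i : ℕ) - (j : ℕ) + 1 ≤ p then φ ((i : ℕ) - (j : ℕ) + 1) (s + (i : ℕ) + 1)
        else 0)
    else 0

/-- The fundamental solution `ξ^{(m)}_{t,s}`: the banded Hessenbergian
`det(Φ^{(m)}_{t,s})` for `t > s`; `1` for `t = s - m + 1`; `0` for other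
`t ∈ [s - p + 1, s]`. -/
def xi (p : ℕ) (φ : ℕ → ℤ → ℂ) (m : ℕ) (s t : ℤ) : ℂ :=
  if s < t then (Phi p φ m s (t - s).toNat).det
  else if t = s - (m : ℤ) + 1 then 1 else 0

open Matrix

section Phi

variable (p : ℕ) (φ : ℕ → ℤ → ℂ) (m : ℕ) (s : ℤ) {k : ℕ}

theorem Phi_apply_eq_zero_of_succ_lt {a b : Fin k} (h : (a : ℕ) + 1 < b) :
    Phi p φ m s k a b = 0 := by
  simp only [Phi, of_apply]
  split_ifs <;> first | rfl | omega

theorem Phi_apply_of_eq_succ {a b : Fin k} (h : (b : ℕ) = a + 1) : Phi p φ m s k a b = -1 := by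
  simp [Phi, h]

theorem Phi_submatrix_add {d n : ℕ} (hd : 1 ≤ d) (h : d + n ≤ k) :
    (Phi p φ m s k).submatrix (fun a : Fin n => ⟨d + a, by omega⟩)
        (fun b : Fin n => ⟨d + b, by omega⟩) = Phi p φ 1 (s + d) n := by
  ext a b
  simp only [Phi, submatrix_apply, of_apply]
  split_ifs <;> first | rfl | omega | (congr 1 <;> push_cast <;> omega)

theorem xi_one_of_le {s t : ℤ} (h : s ≤ t) :
    xi p φ 1 s t = (Phi p φ 1 s (t - s).toNat).det := by
  rcases h.lt_or_eq with h | rfl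
  · simp [xi, h]
  · rw [sub_self, Int.toNat_zero, det_fin_zero]
    simp [xi]

end Phi

section Hessenberg

variable {R : Type*} [CommRing R]

theorem det_submatrix_succAbove_succ_of_hessenberg {k : ℕ}
    (M : Matrix (Fin (k + 1)) (Fin (k + 1)) R)
    (hM : ∀ a b : Fin (k + 1), (a : ℕ) + 1 < b → M a b = 0) (q : Fin (k + 1)) :
    (M.submatrix q.succAbove Fin.succ).det =
      (∏ a : Fin q, M ⟨a, by omega⟩ ⟨a + 1, by omega⟩) *
        (M.submatrix (fun a : Fin (k - q) => ⟨q + 1 + a, by omega⟩)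
          (fun b : Fin (k - q) => ⟨q + 1 + b, by omega⟩)).det := by
  let e : Fin q ⊕ Fin (k - q) ≃ Fin k := finSumFinEquiv.trans (finCongr (by omega))
  have row_inl (a : Fin q) : (q.succAbove (e (.inl a)) : ℕ) = a := by
    simp [e, Fin.succAbove, Fin.lt_def]
  have row_inr (a : Fin (k - q)) : (q.succAbove (e (.inr a)) : ℕ) = q + 1 + a := by
    simp [e, Fin.succAbove, Fin.lt_def]; omega
  have col_inr (b : Fin (k - q)) : ((e (.inr b)).succ : ℕ) = q + 1 + b := by simp [e]; omega
  have hblock : (M.submatrix q.succAbove Fin.succ).submatrix e e =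
      fromBlocks (of fun a b : Fin q => M ⟨a, by omega⟩ ⟨b + 1, by omega⟩) 0
        (of fun a b => M (q.succAbove (e (.inr a))) (e (.inl b)).succ)
        (M.submatrix (fun a : Fin (k - q) => ⟨q + 1 + a, by omega⟩)
          (fun b : Fin (k - q) => ⟨q + 1 + b, by omega⟩)) := by
    ext (a | a) (b | b)
    · simp only [submatrix_apply, fromBlocks_apply₁₁, of_apply]
      congr 1
      ext
      exact row_inl a
    · exact hM _ _ (by rw [row_inl, col_inr]; omega)
    · rfl
    · simp only [submatrix_apply, fromBlocks_apply₂₂]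
      congr 1 <;> ext <;> simp only [row_inr, col_inr]
  rw [← det_submatrix_equiv_self e, hblock, det_fromBlocks_zero₁₂, det_of_isLowerTriangular]
  · rfl
  · intro a b hab
    exact hM _ _ (Nat.succ_lt_succ (OrderDual.toDual_lt_toDual.mp hab))

end Hessenberg

theorem stmt14 (p : ℕ) (φ : ℕ → ℤ → ℂ)
    (m : ℕ) (s t : ℤ)
    (k : ℕ) (hk : (t - s).toNat = k + 1)
    (i : ℕ) (hi1 : 1 ≤ i) (hik : i ≤ k + 1) :
    (-1 : ℂ) ^ (i + 1) *
      ((Phi p φ m s (k + 1)).submatrix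
        ((⟨i - 1, by omega⟩ : Fin (k + 1)).succAbove)
        ((⟨0, by omega⟩ : Fin (k + 1)).succAbove)).det
      = xi p φ 1 (s + (i : ℤ)) t := by
  have hts : (t - (s + i)).toNat = k - (i - 1) := by omega
  rw [show (⟨0, by omega⟩ : Fin (k + 1)).succAbove = Fin.succ from rfl,
    det_submatrix_succAbove_succ_of_hessenberg _ (fun a b => Phi_apply_eq_zero_of_succ_lt p φ m s)]
  simp only [Fin.val_mk, Nat.sub_add_cancel hi1]
  rw [Finset.prod_congr rfl fun a _ => Phi_apply_of_eq_succ p φ m s rfl,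
    Phi_submatrix_add p φ m s hi1 (by omega), xi_one_of_le p φ (by omega), hts,
    Finset.prod_const, Finset.card_univ, Fintype.card_fin, ← mul_assoc, ← pow_add,
    show i + 1 + (i - 1) = 2 * i by omega, pow_mul, neg_one_sq, one_pow, one_mul]
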